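/- arXiv:1712.03234 — 2 statements merged into one kernel-verified Lean document; each statement's English description precedes it below -/
import Mathlib

section
/- Let Λ be a locally convex row-finite k-graph. Then Λ is cofinal if and only if the only saturated hereditary subsets of Λ^0 are ∅ and Λ^0. -/
/-!
Common definitions: higher-rank graphs (`k`-graphs), boundary paths, the
equivalence relation `∼_Λ`, the periodicity group `Per(Λ)`, maximal tails,
hereditary/saturated sets, and (an axiomatization of) the Farthing
desourcification `Λ̄` of a locally convex row-finite `k`-graph `Λ`.
-/

/-- A `k`-graph: a countable small category `Λ` equipped with a degree functor
`d : Λ → ℕ^k` satisfying the factorization property.  Elements of `Path` are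
the morphisms ("paths"); the vertices are the identity morphisms (the paths `v`
with `r v = v`, equivalently of degree `0`).  The composition `comp μ ν` is
only meaningful when `s μ = r ν`. -/
structure KGraph (k : ℕ) where
  Path : Type
  countable_path : Countable Path
  nonempty_path : Nonempty Path
  r : Path → Path
  s : Path → Path
  d : Path → Fin k → ℕ
  comp : Path → Path → Path
  d_r : ∀ μ, d (r μ) = 0
  d_s : ∀ μ, d (s μ) = 0
  r_r : ∀ μ, r (r μ) = r μ
  s_r : ∀ μ, s (r μ) = r μ
  r_s : ∀ μ, r (s μ) = s μ
  s_s : ∀ μ, s (s μ) = s μ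
  comp_id : ∀ μ, comp μ (s μ) = μ
  id_comp : ∀ μ, comp (r μ) μ = μ
  r_comp : ∀ μ ν, s μ = r ν → r (comp μ ν) = r μ
  s_comp : ∀ μ ν, s μ = r ν → s (comp μ ν) = s ν
  d_comp : ∀ μ ν, s μ = r ν → d (comp μ ν) = d μ + d ν
  comp_assoc : ∀ μ ν ρ, s μ = r ν → s ν = r ρ →
    comp (comp μ ν) ρ = comp μ (comp ν ρ)
  factorization : ∀ (lam : Path) (m n : Fin k → ℕ), d lam = m + n →
    ∃! p : Path × Path, d p.1 = m ∧ d p.2 = n ∧ s p.1 = r p.2 ∧ lam = comp p.1 p.2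

namespace KGraph

variable {k : ℕ}

/-- The vertices of a `k`-graph are its identity morphisms. -/
def IsVertex (Λ : KGraph k) (v : Λ.Path) : Prop := Λ.r v = v

/-- `Λ.boundedPaths n` is the set `Λ^{≤ n}`: paths `λ` with `d λ ≤ n` such that
`d(λ)_i < n_i` implies `s(λ)Λ^{e_i} = ∅`. -/
def boundedPaths (Λ : KGraph k) (n : Fin k → ℕ) : Set Λ.Path :=
  {lam | Λ.d lam ≤ n ∧ ∀ i : Fin k, Λ.d lam i < n i →
    ∀ e, Λ.r e = Λ.s lam → Λ.d e ≠ Pi.single i 1}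

/-- `Λ` is row-finite if every `vΛ^n` is finite. -/
def RowFinite (Λ : KGraph k) : Prop :=
  ∀ (v : Λ.Path) (n : Fin k → ℕ), Λ.IsVertex v →
    {lam | Λ.r lam = v ∧ Λ.d lam = n}.Finite

/-- `Λ` is locally convex if for `i ≠ j`, `λ ∈ vΛ^{e_i}` and `μ ∈ vΛ^{e_j}`
one has `s(λ)Λ^{e_j} ≠ ∅` (by symmetry in `i, j` this also gives
`s(μ)Λ^{e_i} ≠ ∅`). -/
def LocallyConvex (Λ : KGraph k) : Prop :=
  ∀ i j : Fin k, i ≠ j → ∀ lam mu : Λ.Path, Λ.r lam = Λ.r mu →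
    Λ.d lam = Pi.single i 1 → Λ.d mu = Pi.single j 1 →
    ∃ lam', Λ.r lam' = Λ.s lam ∧ Λ.d lam' = Pi.single j 1

end KGraph

/-- A boundary path of `Λ`: a degree-preserving functor `x : Ω_{k,m} → Λ`
(`m = deg ∈ (ℕ ∪ {∞})^k`) such that `p ≤ m` and `p_i = m_i` imply
`x(p)Λ^{e_i} = ∅`.  `seg p q` is the path `x(p,q)`, meaningful for
`p ≤ q ≤ deg`; `seg p p` is the vertex `x(p)`. -/
structure BoundaryPath {k : ℕ} (Λ : KGraph k) where
  deg : Fin k → ℕ∞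
  seg : (Fin k → ℕ) → (Fin k → ℕ) → Λ.Path
  seg_d : ∀ p q : Fin k → ℕ, p ≤ q → (∀ i, (q i : ℕ∞) ≤ deg i) →
    Λ.d (seg p q) = q - p
  seg_r : ∀ p q : Fin k → ℕ, p ≤ q → (∀ i, (q i : ℕ∞) ≤ deg i) →
    Λ.r (seg p q) = seg p p
  seg_s : ∀ p q : Fin k → ℕ, p ≤ q → (∀ i, (q i : ℕ∞) ≤ deg i) →
    Λ.s (seg p q) = seg q q
  seg_comp : ∀ p q t : Fin k → ℕ, p ≤ q → q ≤ t → (∀ i, (t i : ℕ∞) ≤ deg i) →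
    Λ.comp (seg p q) (seg q t) = seg p t
  boundary : ∀ p : Fin k → ℕ, (∀ i, (p i : ℕ∞) ≤ deg i) →
    ∀ i : Fin k, (p i : ℕ∞) = deg i →
      ∀ e, Λ.r e = seg p p → Λ.d e ≠ Pi.single i 1

/-- `emin m e` is the coordinatewise minimum `m ∧ e` of `m ∈ ℕ^k` with the
(possibly infinite) degree `e ∈ (ℕ ∪ {∞})^k`, as an element of `ℕ^k`. -/
noncomputable def emin {k : ℕ} (m : Fin k → ℕ) (e : Fin k → ℕ∞) : Fin k → ℕ :=
  fun i => (min ((m i : ℕ∞)) (e i)).toNat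

/-- Equality of boundary paths (of the same degree), as functors. -/
def BPEq {k : ℕ} {Λ : KGraph k} (x y : BoundaryPath Λ) : Prop :=
  x.deg = y.deg ∧ ∀ p q : Fin k → ℕ, p ≤ q → (∀ i, (q i : ℕ∞) ≤ x.deg i) →
    x.seg p q = y.seg p q

/-- `IsExtension Λ lam x y` says that `y = lam · x` is the (unique) boundary
path with `y(0, d lam) = lam` and `y(d lam, d lam + p) = x(0, p)`. -/
def IsExtension {k : ℕ} (Λ : KGraph k) (lam : Λ.Path) (x y : BoundaryPath Λ) :
    Prop :=
  (∀ i, y.deg i = (Λ.d lam i : ℕ∞) + x.deg i) ∧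
  y.seg 0 (Λ.d lam) = lam ∧
  ∀ p : Fin k → ℕ, (∀ i, (p i : ℕ∞) ≤ x.deg i) →
    y.seg (Λ.d lam) (Λ.d lam + p) = x.seg 0 p

/-- The relation `μ ∼_Λ ν`: `s μ = s ν` and `μx = νx` for every boundary path
`x ∈ s(μ)Λ^{≤∞}`. -/
def KGraph.peq {k : ℕ} (Λ : KGraph k) (μ ν : Λ.Path) : Prop :=
  Λ.s μ = Λ.s ν ∧ ∀ x y z : BoundaryPath Λ, x.seg 0 0 = Λ.s μ →
    IsExtension Λ μ x y → IsExtension Λ ν x z → BPEq y z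

/-- `Per(Λ) = {d μ - d ν : μ ∼_Λ ν} ⊆ ℤ^k`. -/
def KGraph.Per {k : ℕ} (Λ : KGraph k) : Set (Fin k → ℤ) :=
  {g | ∃ μ ν : Λ.Path, Λ.peq μ ν ∧ g = fun i => (Λ.d μ i : ℤ) - (Λ.d ν i : ℤ)}

/-- `Λ` is aperiodic if for every vertex `v` there is a boundary path
`x ∈ vΛ^{≤∞}` such that distinct `μ, ν ∈ Λv` have `μx ≠ νx`. -/
def KGraph.Aperiodic {k : ℕ} (Λ : KGraph k) : Prop :=
  ∀ v : Λ.Path, Λ.IsVertex v → ∃ x : BoundaryPath Λ, x.seg 0 0 = v ∧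
    ∀ μ ν : Λ.Path, Λ.s μ = v → Λ.s ν = v → μ ≠ ν →
      ∀ y z : BoundaryPath Λ, IsExtension Λ μ x y → IsExtension Λ ν x z →
        ¬ BPEq y z

/-- A maximal tail: a nonempty set `T` of vertices such that (1) `s λ ∈ T`
implies `r λ ∈ T`; (2) for `v ∈ T` and `n ∈ ℕ^k` there is `λ ∈ vΛ^{≤n}` with
`s λ ∈ T`; (3) any `v, w ∈ T` are connected via `μ ∈ vΛ`, `ν ∈ wΛ` with
`s μ = s ν`. -/
def KGraph.IsMaximalTail {k : ℕ} (Λ : KGraph k) (T : Set Λ.Path) : Prop :=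
  T.Nonempty ∧ (∀ v ∈ T, Λ.IsVertex v) ∧
  (∀ lam : Λ.Path, Λ.s lam ∈ T → Λ.r lam ∈ T) ∧
  (∀ v ∈ T, ∀ n : Fin k → ℕ,
    ∃ lam ∈ Λ.boundedPaths n, Λ.r lam = v ∧ Λ.s lam ∈ T) ∧
  (∀ v ∈ T, ∀ w ∈ T, ∃ μ ν : Λ.Path, Λ.r μ = v ∧ Λ.r ν = w ∧ Λ.s μ = Λ.s ν)

/-- `H_{Per(Λ)}`: the set of vertices `v` such that for all `μ ∈ vΛ` and
`m ∈ ℕ^k` with `d μ - m ∈ Per(Λ)` there exists `ν ∈ vΛ^m` with `μ ∼_Λ ν`. -/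
def KGraph.HPer {k : ℕ} (Λ : KGraph k) : Set Λ.Path :=
  {v | Λ.IsVertex v ∧ ∀ μ : Λ.Path, Λ.r μ = v → ∀ m : Fin k → ℕ,
    (fun i => (Λ.d μ i : ℤ) - (m i : ℤ)) ∈ Λ.Per →
    ∃ ν : Λ.Path, Λ.r ν = v ∧ Λ.d ν = m ∧ Λ.peq μ ν}

/-- A set of vertices `H` is hereditary if `r λ ∈ H` implies `s λ ∈ H`. -/
def KGraph.Hereditary {k : ℕ} (Λ : KGraph k) (H : Set Λ.Path) : Prop :=
  ∀ lam : Λ.Path, Λ.r lam ∈ H → Λ.s lam ∈ H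

/-- A set of vertices `H` is saturated if `s(vΛ^{≤n}) ⊆ H` for some `n ∈ ℕ^k`
implies `v ∈ H`. -/
def KGraph.Saturated {k : ℕ} (Λ : KGraph k) (H : Set Λ.Path) : Prop :=
  ∀ v : Λ.Path, Λ.IsVertex v →
    (∃ n : Fin k → ℕ, ∀ lam ∈ Λ.boundedPaths n, Λ.r lam = v → Λ.s lam ∈ H) →
    v ∈ H

/-- `Σ(H)`: the smallest saturated set containing `H`. -/
def KGraph.SatClosure {k : ℕ} (Λ : KGraph k) (H : Set Λ.Path) : Set Λ.Path :=
  ⋂₀ {S : Set Λ.Path | H ⊆ S ∧ Λ.Saturated S}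

/-- A boundary path `x` is cofinal if every vertex `v` admits `n ≤ d x` with
`vΛx(n) ≠ ∅`. -/
def KGraph.CofinalBP {k : ℕ} (Λ : KGraph k) (x : BoundaryPath Λ) : Prop :=
  ∀ v : Λ.Path, Λ.IsVertex v → ∃ n : Fin k → ℕ,
    (∀ i, (n i : ℕ∞) ≤ x.deg i) ∧ ∃ μ : Λ.Path, Λ.r μ = v ∧ Λ.s μ = x.seg n n

/-- `Λ` is cofinal if all of its boundary paths are cofinal. -/
def KGraph.Cofinal {k : ℕ} (Λ : KGraph k) : Prop :=
  ∀ x : BoundaryPath Λ, Λ.CofinalBP x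

/-- `T(v) = {s μ : μ ∈ vΛ}`, the smallest hereditary set containing `v`. -/
def KGraph.tree {k : ℕ} (Λ : KGraph k) (v : Λ.Path) : Set Λ.Path :=
  {w | ∃ μ : Λ.Path, Λ.r μ = v ∧ Λ.s μ = w}

/-- `Δ(H₁,H₂) = {v ∈ H₁ : T(v) ∩ H₂ = ∅}`. -/
def KGraph.Delta {k : ℕ} (Λ : KGraph k) (H₁ H₂ : Set Λ.Path) : Set Λ.Path :=
  {v ∈ H₁ | Λ.tree v ∩ H₂ = ∅}

/-- `Ω(H₁,H₂) = {v ∈ H₁ \ H₂ : T(v) ∩ H₂ ≠ ∅}`. -/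
def KGraph.Omega {k : ℕ} (Λ : KGraph k) (H₁ H₂ : Set Λ.Path) : Set Λ.Path :=
  {v ∈ H₁ \ H₂ | (Λ.tree v ∩ H₂).Nonempty}

/-- The relation `H₁ ≻ H₂`. -/
def KGraph.Succ {k : ℕ} (Λ : KGraph k) (H₁ H₂ : Set Λ.Path) : Prop :=
  H₂ ⊆ H₁ ∧ (Λ.Delta H₁ H₂).Nonempty ∧
  ∀ v ∈ Λ.Omega H₁ H₂, ∃ n : Fin k → ℕ,
    ∀ lam ∈ Λ.boundedPaths n, Λ.r lam = v → Λ.s lam ∈ H₂ ∪ Λ.Delta H₁ H₂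

/-- `IsGlue Λ x n y p z` says that `z` is the boundary path
`x(0, n ∧ d x) · σ^{p ∧ d y}(y)`. -/
def IsGlue {k : ℕ} (Λ : KGraph k) (x : BoundaryPath Λ) (n : Fin k → ℕ)
    (y : BoundaryPath Λ) (p : Fin k → ℕ) (z : BoundaryPath Λ) : Prop :=
  (∀ i, z.deg i = (emin n x.deg i : ℕ∞) + (y.deg i - (emin p y.deg i : ℕ∞))) ∧
  z.seg 0 (emin n x.deg) = x.seg 0 (emin n x.deg) ∧
  ∀ t : Fin k → ℕ, (∀ i, ((emin p y.deg i + t i : ℕ) : ℕ∞) ≤ y.deg i) →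
    z.seg (emin n x.deg) (emin n x.deg + t) =
      y.seg (emin p y.deg) (emin p y.deg + t)

/-- The Farthing desourcification `Λ̄ = P_Λ/≈` of `Λ`: a `k`-graph `bar`
without sources whose morphisms are the classes `cls x m n = [x;(m,n)]`
(`x ∈ Λ^{≤∞}`, `m ≤ n ∈ ℕ^k`), where `[x;(m,n)] = [y;(p,q)]` iff
(P1) `x(m ∧ d x, n ∧ d x) = y(p ∧ d y, q ∧ d y)`,
(P2) `m - m ∧ d x = p - p ∧ d y` and (P3) `n - m = q - p`; together with the
range, source, degree and composition formulas, the canonical embedding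
`emb : Λ → Λ̄` (`λ ↦ [λx;(0, d λ)]`) and the projection `proj = π : Λ̄ → Λ`,
`π [x;(m,n)] = [x;(m ∧ d x, n ∧ d x)]`. -/
structure Desourcification {k : ℕ} (Λ : KGraph k) where
  bar : KGraph k
  noSources : ∀ v : bar.Path, bar.IsVertex v → ∀ i : Fin k,
    ∃ e, bar.r e = v ∧ bar.d e = Pi.single i 1
  cls : BoundaryPath Λ → (Fin k → ℕ) → (Fin k → ℕ) → bar.Path
  cls_surjective : ∀ μ : bar.Path,
    ∃ (x : BoundaryPath Λ) (m : Fin k → ℕ), μ = cls x m (m + bar.d μ)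
  cls_eq_iff : ∀ (x : BoundaryPath Λ) (m n : Fin k → ℕ) (y : BoundaryPath Λ)
    (p q : Fin k → ℕ), m ≤ n → p ≤ q →
    (cls x m n = cls y p q ↔
      (x.seg (emin m x.deg) (emin n x.deg) =
          y.seg (emin p y.deg) (emin q y.deg) ∧
        m - emin m x.deg = p - emin p y.deg ∧
        n - m = q - p))
  d_cls : ∀ (x : BoundaryPath Λ) (m n : Fin k → ℕ), m ≤ n →
    bar.d (cls x m n) = n - m
  r_cls : ∀ (x : BoundaryPath Λ) (m n : Fin k → ℕ), m ≤ n →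
    bar.r (cls x m n) = cls x m m
  s_cls : ∀ (x : BoundaryPath Λ) (m n : Fin k → ℕ), m ≤ n →
    bar.s (cls x m n) = cls x n n
  comp_cls : ∀ (x y : BoundaryPath Λ) (m n p q : Fin k → ℕ), m ≤ n → p ≤ q →
    bar.s (cls x m n) = bar.r (cls y p q) →
    ∀ z : BoundaryPath Λ, IsGlue Λ x n y p z →
      bar.comp (cls x m n) (cls y p q) = cls z m (n + (q - p))
  emb : Λ.Path → bar.Path
  emb_injective : Function.Injective emb
  emb_r : ∀ lam : Λ.Path, emb (Λ.r lam) = bar.r (emb lam)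
  emb_s : ∀ lam : Λ.Path, emb (Λ.s lam) = bar.s (emb lam)
  emb_d : ∀ lam : Λ.Path, bar.d (emb lam) = Λ.d lam
  emb_comp : ∀ μ ν : Λ.Path, Λ.s μ = Λ.r ν →
    emb (Λ.comp μ ν) = bar.comp (emb μ) (emb ν)
  emb_cls : ∀ (lam : Λ.Path) (x y : BoundaryPath Λ), x.seg 0 0 = Λ.s lam →
    IsExtension Λ lam x y → emb lam = cls y 0 (Λ.d lam)
  proj : bar.Path → Λ.Path
  proj_cls : ∀ (x : BoundaryPath Λ) (m n : Fin k → ℕ), m ≤ n →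
    proj (cls x m n) = x.seg (emin m x.deg) (emin n x.deg)

/-- `IsInfClass D x p z` says that `z` is the infinite path `[x;(p,∞)]` of
`Λ̄`, i.e. `z(m,n) = [x;(p+m, p+n)]`. -/
def IsInfClass {k : ℕ} {Λ : KGraph k} (D : Desourcification Λ)
    (x : BoundaryPath Λ) (p : Fin k → ℕ) (z : BoundaryPath D.bar) : Prop :=
  (∀ i, z.deg i = (⊤ : ℕ∞)) ∧
  ∀ m n : Fin k → ℕ, m ≤ n → z.seg m n = D.cls x (p + m) (p + n)

/-- `IsShift x n y` says that `y = σ^n(x)` is the `n`-shifted boundary path,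
`σ^n(x)(p,q) = x(p+n, q+n)`, of degree `d x - n`. -/
def IsShift {k : ℕ} {Λ : KGraph k} (x : BoundaryPath Λ) (n : Fin k → ℕ)
    (y : BoundaryPath Λ) : Prop :=
  (∀ i, y.deg i = x.deg i - (n i : ℕ∞)) ∧
  ∀ p q : Fin k → ℕ, p ≤ q → (∀ i, (q i : ℕ∞) ≤ y.deg i) →
    y.seg p q = x.seg (p + n) (q + n)

/-!
If `H` is saturated and `v ∉ H`, saturation applied with `n = (1,…,1)` lets one extend any path
ending outside `H` by a path of `Λ^{≤(1,…,1)}` that still ends outside `H`. Iterating from `v`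
gives an increasing chain of paths, whose union is a boundary path (local convexity turns
"eventually no more edges of colour `i` are added" into the boundary condition); by heredity it
never meets `H`, so by cofinality and heredity `H` has no vertex at all.

Conversely, for a boundary path `x` the vertices that cannot reach `x` form a hereditary set.
It is saturated because a vertex `u` reaching `x` through `μ` has, for every `n`, an initial
segment in `uΛ^{≤n}` of `μ x(m, (m + n) ∧ d x)`, whose source still reaches `x`. As it misses
`x(0)`, this set is empty, i.e. `x` is cofinal.
-/

open Filter

theorem exists_seq_of_forall_exists {α : Type*} {P : α → Prop} {R : α → α → Prop}
    (h : ∀ a, P a → ∃ b, P b ∧ R a b) {a₀ : α} (h₀ : P a₀) :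
    ∃ f : ℕ → α, f 0 = a₀ ∧ ∀ j, P (f j) ∧ R (f j) (f (j + 1)) := by
  choose g hg using fun a : {a // P a} => h a a.2
  let f : ℕ → {a // P a} := fun j => Nat.rec ⟨a₀, h₀⟩ (fun _ a => ⟨g a, (hg a).1⟩) j
  exact ⟨fun j => (f j).1, rfl, fun j => ⟨(f j).2, (hg (f j)).2⟩⟩

theorem Monotone.eventually_le_of_natCast_le_iSup {f : ℕ → ℕ} (hf : Monotone f) {n : ℕ}
    (h : (n : ℕ∞) ≤ ⨆ j, (f j : ℕ∞)) : ∀ᶠ j in atTop, n ≤ f j := by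
  obtain ⟨j, hj⟩ : ∃ j, n ≤ f j := by
    by_contra! hlt
    have hle : (n : ℕ∞) ≤ (n - 1 : ℕ) :=
      h.trans (iSup_le fun j => Nat.cast_le.2 (Nat.le_pred_of_lt (hlt j)))
    have hpos := hlt 0
    have hle' : n ≤ n - 1 := Nat.cast_le.1 hle
    omega
  exact eventually_atTop.2 ⟨j, fun j' hj' => hj.trans (hf hj')⟩

theorem Monotone.eventually_natCast_eq_iSup {f : ℕ → ℕ} (hf : Monotone f)
    (h : (⨆ j, (f j : ℕ∞)) ≠ ⊤) : ∀ᶠ j in atTop, (f j : ℕ∞) = ⨆ j, (f j : ℕ∞) := by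
  obtain ⟨N, hN⟩ := ENat.exists_eq_iSup_of_lt_top h.lt_top
  refine eventually_atTop.2 ⟨N, fun j hj => le_antisymm (le_iSup (fun j => (f j : ℕ∞)) j) ?_⟩
  rw [← hN]
  exact_mod_cast hf hj

section Emin

variable {k : ℕ} {m n : Fin k → ℕ} {e : Fin k → ℕ∞}

theorem natCast_emin (m : Fin k → ℕ) (e : Fin k → ℕ∞) (i : Fin k) :
    (emin m e i : ℕ∞) = min (m i : ℕ∞) (e i) :=
  ENat.natCast_toNat (min_lt_of_left_lt (ENat.natCast_lt_top (m i))).ne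

theorem natCast_emin_le (m : Fin k → ℕ) (e : Fin k → ℕ∞) (i : Fin k) : (emin m e i : ℕ∞) ≤ e i :=
  (natCast_emin m e i).trans_le (min_le_right _ _)

theorem le_emin (hmn : m ≤ n) (hm : ∀ i, (m i : ℕ∞) ≤ e i) : m ≤ emin n e := fun i => by
  have : (m i : ℕ∞) ≤ emin n e i := (natCast_emin n e i).symm ▸ le_min (by simpa using hmn i) (hm i)
  exact_mod_cast this

theorem natCast_emin_eq_of_lt {i : Fin k} (h : emin m e i < m i) : (emin m e i : ℕ∞) = e i := by
  have hmin := natCast_emin m e i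
  rw [hmin, min_eq_right]
  by_contra! hlt
  rw [min_eq_left hlt.le] at hmin
  exact h.ne (by exact_mod_cast hmin)

end Emin

namespace KGraph

variable {k : ℕ} (Λ : KGraph k)

/-- `vΛ^{e_i} = ∅`. -/
def IsSource (i : Fin k) (v : Λ.Path) : Prop :=
  ∀ e, Λ.r e = v → Λ.d e ≠ Pi.single i 1

def IsPrefix (a b : Λ.Path) : Prop :=
  ∃ c, Λ.s a = Λ.r c ∧ Λ.comp a c = b

/-- `wΛx(n) ≠ ∅` for some `n ≤ d x`. -/
def Reaches (w : Λ.Path) (x : BoundaryPath Λ) : Prop :=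
  ∃ n : Fin k → ℕ, (∀ i, (n i : ℕ∞) ≤ x.deg i) ∧ ∃ μ, Λ.r μ = w ∧ Λ.s μ = x.seg n n

theorem isVertex_s (μ : Λ.Path) : Λ.IsVertex (Λ.s μ) := Λ.r_s μ

theorem s_eq_of_isVertex {Λ : KGraph k} {v : Λ.Path} (hv : Λ.IsVertex v) : Λ.s v = v :=
  hv ▸ Λ.s_r v

section Factorization

variable {Λ} {lam a b : Λ.Path} {m p q t : Fin k → ℕ}

variable (Λ) in
open Classical in
/-- The factorization `lam = lam(0, m) lam(m, d lam)`; junk when `m ≰ d lam`. -/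
noncomputable def split (lam : Λ.Path) (m : Fin k → ℕ) : Λ.Path × Λ.Path :=
  if h : m ≤ Λ.d lam then
    (Λ.factorization lam m (Λ.d lam - m) (add_tsub_cancel_of_le h).symm).exists.choose
  else (lam, lam)

theorem split_spec (h : m ≤ Λ.d lam) :
    Λ.d (Λ.split lam m).1 = m ∧ Λ.d (Λ.split lam m).2 = Λ.d lam - m ∧
      Λ.s (Λ.split lam m).1 = Λ.r (Λ.split lam m).2 ∧
      lam = Λ.comp (Λ.split lam m).1 (Λ.split lam m).2 := by
  rw [split, dif_pos h]
  exact (Λ.factorization lam m (Λ.d lam - m) (add_tsub_cancel_of_le h).symm).exists.choose_spec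

theorem split_comp_eq (hd : Λ.d a = m) (hs : Λ.s a = Λ.r b) :
    Λ.split (Λ.comp a b) m = (a, b) := by
  have hdab : Λ.d (Λ.comp a b) = m + Λ.d b := by rw [Λ.d_comp a b hs, hd]
  have h : m ≤ Λ.d (Λ.comp a b) := hdab ▸ le_self_add
  refine (Λ.factorization _ m _ (add_tsub_cancel_of_le h).symm).unique (split_spec h)
    ⟨hd, ?_, hs, rfl⟩
  rw [hdab, add_tsub_cancel_left]

theorem split_zero : Λ.split lam 0 = (Λ.r lam, lam) := by
  simpa only [Λ.id_comp] using split_comp_eq (Λ.d_r lam) (Λ.s_r lam)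

theorem split_d : Λ.split lam (Λ.d lam) = (lam, Λ.s lam) := by
  simpa only [Λ.comp_id] using split_comp_eq rfl (Λ.r_s lam).symm

theorem s_eq_r_of_d_eq_zero (h : Λ.d lam = 0) : Λ.s lam = Λ.r lam := by
  obtain ⟨hr, hs⟩ := Prod.ext_iff.1 ((split_zero (lam := lam)).symm.trans (h ▸ split_d))
  exact hs.symm.trans hr.symm

theorem r_split_fst (h : m ≤ Λ.d lam) : Λ.r (Λ.split lam m).1 = Λ.r lam := by
  obtain ⟨-, -, hs, hc⟩ := split_spec h
  conv_rhs => rw [hc]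
  exact (Λ.r_comp _ _ hs).symm

theorem s_split_snd (h : m ≤ Λ.d lam) : Λ.s (Λ.split lam m).2 = Λ.s lam := by
  obtain ⟨-, -, hs, hc⟩ := split_spec h
  conv_rhs => rw [hc]
  exact (Λ.s_comp _ _ hs).symm

theorem split_add (h : p + t ≤ Λ.d lam) :
    Λ.split lam (p + t) =
      (Λ.comp (Λ.split lam p).1 (Λ.split (Λ.split lam p).2 t).1,
        (Λ.split (Λ.split lam p).2 t).2) := by
  have hp : p ≤ Λ.d lam := le_self_add.trans h
  obtain ⟨hd₁, hd₂, hs, hc⟩ := split_spec hp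
  have ht : t ≤ Λ.d (Λ.split lam p).2 := hd₂ ▸ le_tsub_of_add_le_left h
  obtain ⟨hd₁', -, hs', hc'⟩ := split_spec ht
  have hmid : Λ.s (Λ.split lam p).1 = Λ.r (Λ.split (Λ.split lam p).2 t).1 :=
    hs.trans (r_split_fst ht).symm
  have := split_comp_eq (m := p + t) (by rw [Λ.d_comp _ _ hmid, hd₁, hd₁'])
    ((Λ.s_comp _ _ hmid).trans hs')
  rwa [Λ.comp_assoc _ _ _ hmid hs', ← hc', ← hc] at this

theorem split_comp (h : m ≤ Λ.d a) (hs : Λ.s a = Λ.r b) :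
    Λ.split (Λ.comp a b) m = ((Λ.split a m).1, Λ.comp (Λ.split a m).2 b) := by
  obtain ⟨hd₁, -, hs₁, hc⟩ := split_spec h
  have hs₂ : Λ.s (Λ.split a m).2 = Λ.r b := (s_split_snd h).trans hs
  have := split_comp_eq hd₁ (hs₁.trans (Λ.r_comp _ _ hs₂).symm)
  rwa [← Λ.comp_assoc _ _ _ hs₁ hs₂, ← hc] at this

variable (Λ) in
/-- The segment `lam(p, q)`, meaningful for `p ≤ q ≤ d lam`. -/
noncomputable def segment (lam : Λ.Path) (p q : Fin k → ℕ) : Λ.Path :=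
  (Λ.split (Λ.split lam p).2 (q - p)).1

theorem sub_le_d_split_snd (hp : p ≤ Λ.d lam) (hq : q ≤ Λ.d lam) :
    q - p ≤ Λ.d (Λ.split lam p).2 :=
  (split_spec hp).2.1 ▸ tsub_le_tsub_right hq p

theorem segment_d (hp : p ≤ Λ.d lam) (hq : q ≤ Λ.d lam) : Λ.d (Λ.segment lam p q) = q - p :=
  (split_spec (sub_le_d_split_snd hp hq)).1

theorem segment_self : Λ.segment lam p p = Λ.r (Λ.split lam p).2 := by
  rw [segment, tsub_self, split_zero]

theorem segment_d_d : Λ.segment lam (Λ.d lam) (Λ.d lam) = Λ.s lam := by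
  rw [segment_self, split_d, Λ.r_s]

theorem r_segment (hpq : p ≤ q) (hq : q ≤ Λ.d lam) :
    Λ.r (Λ.segment lam p q) = Λ.segment lam p p := by
  rw [segment_self]
  exact r_split_fst (sub_le_d_split_snd (hpq.trans hq) hq)

theorem s_segment (hpq : p ≤ q) (hq : q ≤ Λ.d lam) :
    Λ.s (Λ.segment lam p q) = Λ.segment lam q q := by
  have hsplit := split_add (lam := lam) (p := p) (t := q - p) (by rwa [add_tsub_cancel_of_le hpq])
  rw [add_tsub_cancel_of_le hpq] at hsplit
  rw [segment_self, hsplit, segment]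
  exact (split_spec (sub_le_d_split_snd (hpq.trans hq) hq)).2.2.1

theorem segment_comp (hpq : p ≤ q) (hqt : q ≤ t) (ht : t ≤ Λ.d lam) :
    Λ.comp (Λ.segment lam p q) (Λ.segment lam q t) = Λ.segment lam p t := by
  have hp : p ≤ Λ.d lam := hpq.trans (hqt.trans ht)
  have hsum : q - p + (t - q) = t - p := by rw [add_comm, tsub_add_tsub_cancel hqt hpq]
  have hq := split_add (lam := lam) (p := p) (t := q - p)
    (by rw [add_tsub_cancel_of_le hpq]; exact hqt.trans ht)
  rw [add_tsub_cancel_of_le hpq] at hq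
  have ht' := split_add (lam := (Λ.split lam p).2) (p := q - p) (t := t - q)
    (by rw [hsum]; exact sub_le_d_split_snd hp ht)
  rw [hsum] at ht'
  rw [segment, segment, segment, hq, ht']

theorem IsPrefix.d_le (h : Λ.IsPrefix a b) : Λ.d a ≤ Λ.d b := by
  obtain ⟨c, hs, rfl⟩ := h
  rw [Λ.d_comp _ _ hs]
  exact le_self_add

theorem IsPrefix.segment_eq (h : Λ.IsPrefix a b) (hpq : p ≤ q) (hq : q ≤ Λ.d a) :
    Λ.segment b p q = Λ.segment a p q := by
  obtain ⟨c, hs, rfl⟩ := h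
  have hp : p ≤ Λ.d a := hpq.trans hq
  rw [segment, segment, split_comp hp hs,
    split_comp (sub_le_d_split_snd hp hq) ((s_split_snd hp).trans hs)]

end Factorization

variable {Λ}

/-- Local convexity lets an edge of colour `i` at `r η` be pushed along `η` when `d η i = 0`,
one edge of `η` at a time. -/
theorem LocallyConvex.isSource_r (hlc : Λ.LocallyConvex) {i : Fin k} {η : Λ.Path}
    (hη : Λ.d η i = 0) (hs : Λ.IsSource i (Λ.s η)) : Λ.IsSource i (Λ.r η) := by
  induction hN : ∑ l, Λ.d η l generalizing η with
  | zero =>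
    rw [← s_eq_r_of_d_eq_zero (funext fun l => Finset.sum_eq_zero_iff.1 hN l (by simp))]
    exact hs
  | succ N ih =>
    obtain ⟨j, -, hj⟩ := Finset.exists_ne_zero_of_sum_ne_zero (hN.trans_ne N.succ_ne_zero)
    have hji : j ≠ i := by rintro rfl; exact hj hη
    have hle : Pi.single j 1 ≤ Λ.d η := by
      intro l
      rcases eq_or_ne l j with rfl | hl
      · simpa [Nat.one_le_iff_ne_zero] using hj
      · simp [hl]
    obtain ⟨hd₁, hd₂, hs₁, hc⟩ := split_spec hle
    intro e he hde
    obtain ⟨e', he', hde'⟩ := hlc j i hji _ e ((r_split_fst hle).trans he.symm) hd₁ hde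
    refine ih (η := (Λ.split η (Pi.single j 1)).2) ?_ ((s_split_snd hle).symm ▸ hs) ?_ e'
      (he'.trans hs₁) hde'
    · simp [hd₂, hη]
    · rw [← tsub_add_cancel_of_le hle] at hN
      simp only [Pi.add_apply, Finset.sum_add_distrib, Finset.sum_pi_single', Finset.mem_univ,
        if_true] at hN
      rw [hd₂]
      omega

theorem LocallyConvex.exists_prefix_mem_boundedPaths (hlc : Λ.LocallyConvex) (ρ : Λ.Path)
    (n : Fin k → ℕ) (hρ : ∀ i, Λ.d ρ i < n i → Λ.IsSource i (Λ.s ρ)) :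
    ∃ lam ∈ Λ.boundedPaths n, ∃ η, Λ.s lam = Λ.r η ∧ Λ.comp lam η = ρ := by
  obtain ⟨hd₁, hd₂, hs, hc⟩ := split_spec (lam := ρ) (inf_le_right : n ⊓ Λ.d ρ ≤ Λ.d ρ)
  refine ⟨_, ⟨hd₁.trans_le inf_le_left, fun i hi => ?_⟩, _, hs, hc.symm⟩
  rw [hd₁, Pi.inf_apply] at hi
  have hρi : Λ.d ρ i < n i := not_le.1 (inf_lt_left.1 hi)
  have hη : Λ.d (Λ.split ρ (n ⊓ Λ.d ρ)).2 i = 0 := by simp [hd₂, hρi.le]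
  rw [hs]
  exact hlc.isSource_r hη ((s_split_snd inf_le_right).symm ▸ hρ i hρi)

theorem reaches_seg_zero (x : BoundaryPath Λ) : Λ.Reaches (x.seg 0 0) x :=
  ⟨0, by simp, x.seg 0 0, x.seg_r 0 0 le_rfl (by simp), x.seg_s 0 0 le_rfl (by simp)⟩

theorem Reaches.of_s {x : BoundaryPath Λ} {lam : Λ.Path} (h : Λ.Reaches (Λ.s lam) x) :
    Λ.Reaches (Λ.r lam) x := by
  obtain ⟨n, hn, μ, hμ, hμx⟩ := h
  exact ⟨n, hn, Λ.comp lam μ, Λ.r_comp _ _ hμ.symm, (Λ.s_comp _ _ hμ.symm).trans hμx⟩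

theorem LocallyConvex.exists_boundedPaths_reaches (hlc : Λ.LocallyConvex) {x : BoundaryPath Λ}
    {u : Λ.Path} (hu : Λ.Reaches u x) (n : Fin k → ℕ) :
    ∃ lam ∈ Λ.boundedPaths n, Λ.r lam = u ∧ Λ.Reaches (Λ.s lam) x := by
  obtain ⟨m, hm, μ, rfl, hμ⟩ := hu
  set q := emin (m + n) x.deg
  have hq : ∀ i, (q i : ℕ∞) ≤ x.deg i := natCast_emin_le _ _
  have hmq : m ≤ q := le_emin le_self_add hm
  have hs : Λ.s μ = Λ.r (x.seg m q) := hμ.trans (x.seg_r m q hmq hq).symm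
  have hsource : ∀ i, Λ.d (Λ.comp μ (x.seg m q)) i < n i →
      Λ.IsSource i (Λ.s (Λ.comp μ (x.seg m q))) := fun i hi => by
    rw [Λ.d_comp _ _ hs, x.seg_d m q hmq hq, Pi.add_apply, Pi.sub_apply] at hi
    rw [Λ.s_comp _ _ hs, x.seg_s m q hmq hq]
    have hqi : q i < (m + n) i := by have := hmq i; rw [Pi.add_apply]; omega
    exact x.boundary q hq i (natCast_emin_eq_of_lt hqi)
  obtain ⟨lam, hlam, η, hlη, hc⟩ := hlc.exists_prefix_mem_boundedPaths _ n hsource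
  refine ⟨lam, hlam, ?_, q, hq, η, hlη.symm, ?_⟩
  · rw [← Λ.r_comp _ _ hs, ← hc, Λ.r_comp _ _ hlη]
  · rw [← Λ.s_comp _ _ hlη, hc, Λ.s_comp _ _ hs, x.seg_s m q hmq hq]

theorem hereditary_not_reaches (x : BoundaryPath Λ) :
    Λ.Hereditary {w | Λ.IsVertex w ∧ ¬ Λ.Reaches w x} :=
  fun lam hlam => ⟨Λ.isVertex_s lam, fun h => hlam.2 h.of_s⟩

theorem LocallyConvex.saturated_not_reaches (hlc : Λ.LocallyConvex) (x : BoundaryPath Λ) :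
    Λ.Saturated {w | Λ.IsVertex w ∧ ¬ Λ.Reaches w x} := by
  rintro u hu ⟨n, hn⟩
  refine ⟨hu, fun hux => ?_⟩
  obtain ⟨lam, hlam, hr, hs⟩ := hlc.exists_boundedPaths_reaches hux n
  exact (hn lam hlam hr).2 hs

section Chain

variable {π : ℕ → Λ.Path}

theorem monotone_d_of_isPrefix (hπ : ∀ j, Λ.IsPrefix (π j) (π (j + 1))) :
    Monotone fun j => Λ.d (π j) :=
  monotone_nat_of_le_succ fun j => (hπ j).d_le

theorem segment_eq_of_isPrefix (hπ : ∀ j, Λ.IsPrefix (π j) (π (j + 1))) {j j' : ℕ}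
    {p q : Fin k → ℕ} (hpq : p ≤ q) (hj : q ≤ Λ.d (π j)) (hj' : q ≤ Λ.d (π j')) :
    Λ.segment (π j) p q = Λ.segment (π j') p q := by
  have key : ∀ j₁ j₂, j₁ ≤ j₂ → q ≤ Λ.d (π j₁) →
      Λ.segment (π j₂) p q = Λ.segment (π j₁) p q := by
    intro j₁ j₂ hle hj₁
    induction j₂, hle using Nat.le_induction with
    | base => rfl
    | succ n hn ih =>
      rw [(hπ n).segment_eq hpq (hj₁.trans (monotone_d_of_isPrefix hπ hn)), ih]
  rcases le_total j j' with h | h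
  · exact (key j j' h hj).symm
  · exact key j' j h hj'

noncomputable def chainDeg (π : ℕ → Λ.Path) (i : Fin k) : ℕ∞ :=
  ⨆ j, (Λ.d (π j) i : ℕ∞)

theorem eventually_le_d_of_le_chainDeg (hπ : ∀ j, Λ.IsPrefix (π j) (π (j + 1)))
    {q : Fin k → ℕ} (hq : ∀ i, (q i : ℕ∞) ≤ chainDeg π i) : ∀ᶠ j in atTop, q ≤ Λ.d (π j) :=
  eventually_all.2 fun i =>
    ((Function.monotone_eval i).comp (monotone_d_of_isPrefix hπ)).eventually_le_of_natCast_le_iSup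
      (hq i)

theorem eventually_d_eq_chainDeg (hπ : ∀ j, Λ.IsPrefix (π j) (π (j + 1))) {i : Fin k}
    (hi : chainDeg π i ≠ ⊤) : ∀ᶠ j in atTop, (Λ.d (π j) i : ℕ∞) = chainDeg π i :=
  ((Function.monotone_eval i).comp (monotone_d_of_isPrefix hπ)).eventually_natCast_eq_iSup hi

open Classical in
noncomputable def chainSeg (π : ℕ → Λ.Path) (p q : Fin k → ℕ) : Λ.Path :=
  Λ.segment (π (if h : ∃ j, q ≤ Λ.d (π j) then h.choose else 0)) p q

theorem chainSeg_eq (hπ : ∀ j, Λ.IsPrefix (π j) (π (j + 1))) {p q : Fin k → ℕ} {j : ℕ}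
    (hpq : p ≤ q) (hj : q ≤ Λ.d (π j)) : chainSeg π p q = Λ.segment (π j) p q := by
  have h : ∃ j, q ≤ Λ.d (π j) := ⟨j, hj⟩
  rw [chainSeg, dif_pos h]
  exact segment_eq_of_isPrefix hπ hpq h.choose_spec hj

end Chain

end KGraph

open KGraph in
/-- The union of an increasing chain of paths. At `x(p)` with `p i = d(x) i` there is no edge of
colour `i`: some `π j` ends at a vertex without one, and `π j (p, d (π j))` has `i`-degree `0`. -/
noncomputable def BoundaryPath.ofChain {k : ℕ} {Λ : KGraph k} (hlc : Λ.LocallyConvex)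
    {π : ℕ → Λ.Path} (hπ : ∀ j, Λ.IsPrefix (π j) (π (j + 1)))
    (hsource : ∀ i, chainDeg π i ≠ ⊤ → ∃ᶠ j in atTop, Λ.IsSource i (Λ.s (π j))) :
    BoundaryPath Λ where
  deg := chainDeg π
  seg := chainSeg π
  seg_d p q hpq hq := by
    obtain ⟨j, hj⟩ := (eventually_le_d_of_le_chainDeg hπ hq).exists
    rw [chainSeg_eq hπ hpq hj, segment_d (hpq.trans hj) hj]
  seg_r p q hpq hq := by
    obtain ⟨j, hj⟩ := (eventually_le_d_of_le_chainDeg hπ hq).exists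
    rw [chainSeg_eq hπ hpq hj, r_segment hpq hj, chainSeg_eq hπ le_rfl (hpq.trans hj)]
  seg_s p q hpq hq := by
    obtain ⟨j, hj⟩ := (eventually_le_d_of_le_chainDeg hπ hq).exists
    rw [chainSeg_eq hπ hpq hj, s_segment hpq hj, chainSeg_eq hπ le_rfl hj]
  seg_comp p q t hpq hqt ht := by
    obtain ⟨j, hj⟩ := (eventually_le_d_of_le_chainDeg hπ ht).exists
    rw [chainSeg_eq hπ hpq (hqt.trans hj), chainSeg_eq hπ hqt hj,
      chainSeg_eq hπ (hpq.trans hqt) hj, segment_comp hpq hqt hj]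
  boundary p hp i hpi := by
    have hi : chainDeg π i ≠ ⊤ := hpi ▸ ENat.natCast_ne_top (p i)
    obtain ⟨j, ⟨hpj, hdj⟩, hsj⟩ := ((eventually_le_d_of_le_chainDeg hπ hp).and
      (eventually_d_eq_chainDeg hπ hi)).and_frequently (hsource i hi) |>.exists
    have hη : Λ.d (Λ.segment (π j) p (Λ.d (π j))) i = 0 := by
      rw [segment_d hpj le_rfl, Pi.sub_apply, tsub_eq_zero_iff_le]
      exact_mod_cast hdj.trans hpi.symm |>.le
    have hs : Λ.IsSource i (Λ.s (Λ.segment (π j) p (Λ.d (π j)))) := by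
      rwa [s_segment hpj le_rfl, segment_d_d]
    have := hlc.isSource_r hη hs
    rwa [r_segment hpj le_rfl, ← chainSeg_eq hπ le_rfl hpj] at this

namespace KGraph

variable {k : ℕ} {Λ : KGraph k} {π : ℕ → Λ.Path}

theorem frequently_isSource_of_boundedPaths_one
    (hπ : ∀ j, ∃ lam ∈ Λ.boundedPaths 1, Λ.s (π j) = Λ.r lam ∧ Λ.comp (π j) lam = π (j + 1))
    {i : Fin k} (hi : chainDeg π i ≠ ⊤) : ∃ᶠ j in atTop, Λ.IsSource i (Λ.s (π j)) := by
  have hprefix : ∀ j, Λ.IsPrefix (π j) (π (j + 1)) := fun j => (hπ j).imp fun _ h => h.2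
  have hconst := eventually_d_eq_chainDeg hprefix hi
  refine frequently_atTop.2 fun a => ?_
  obtain ⟨j, hja, hj, hj'⟩ := ((eventually_ge_atTop a).and
    (hconst.and ((tendsto_add_atTop_nat 1).eventually hconst))).exists
  obtain ⟨lam, hlam, hs, hc⟩ := hπ j
  have hlami : Λ.d lam i = 0 := by
    have := hj'.trans hj.symm
    rw [← hc, Λ.d_comp _ _ hs] at this
    simpa using this
  refine ⟨j + 1, by omega, ?_⟩
  rw [← hc, Λ.s_comp _ _ hs]
  exact hlam.2 i (by simp [hlami])

theorem LocallyConvex.exists_boundaryPath_forall_seg_notMem (hlc : Λ.LocallyConvex)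
    {H : Set Λ.Path} (hH : Λ.Hereditary H) (hsat : Λ.Saturated H) {v : Λ.Path}
    (hv : Λ.IsVertex v) (hvH : v ∉ H) :
    ∃ x : BoundaryPath Λ, ∀ n, (∀ i, (n i : ℕ∞) ≤ x.deg i) → x.seg n n ∉ H := by
  have hstep : ∀ ρ : Λ.Path, Λ.s ρ ∉ H →
      ∃ ρ', Λ.s ρ' ∉ H ∧ ∃ lam ∈ Λ.boundedPaths 1, Λ.s ρ = Λ.r lam ∧ Λ.comp ρ lam = ρ' := by
    intro ρ hρ
    obtain ⟨lam, hlam, hr, hs⟩ : ∃ lam ∈ Λ.boundedPaths 1, Λ.r lam = Λ.s ρ ∧ Λ.s lam ∉ H := by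
      by_contra! h
      exact hρ (hsat _ (Λ.isVertex_s ρ) ⟨1, h⟩)
    exact ⟨_, (Λ.s_comp _ _ hr.symm).symm ▸ hs, lam, hlam, hr.symm, rfl⟩
  obtain ⟨π, -, hπ⟩ := exists_seq_of_forall_exists hstep (s_eq_of_isVertex hv ▸ hvH)
  have hprefix : ∀ j, Λ.IsPrefix (π j) (π (j + 1)) := fun j => (hπ j).2.imp fun _ h => h.2
  refine ⟨.ofChain hlc hprefix fun i => frequently_isSource_of_boundedPaths_one (hπ · |>.2),
    fun n hn hnH => ?_⟩
  obtain ⟨j, hj⟩ := (eventually_le_d_of_le_chainDeg hprefix hn).exists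
  have hη := hH (Λ.segment (π j) n (Λ.d (π j)))
  rw [r_segment hj le_rfl, s_segment hj le_rfl, segment_d_d] at hη
  exact (hπ j).1 (hη ((chainSeg_eq hprefix le_rfl hj).symm ▸ hnH))

end KGraph

open KGraph

theorem statement14_general {k : ℕ} (Λ : KGraph k) (hlc : Λ.LocallyConvex) :
    Λ.Cofinal ↔ ∀ H : Set Λ.Path, (∀ v ∈ H, Λ.IsVertex v) →
      Λ.Hereditary H → Λ.Saturated H → H = ∅ ∨ H = {v | Λ.IsVertex v} := by
  constructor
  · intro hcof H hHv hH hsat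
    refine H.eq_empty_or_nonempty.imp id fun ⟨w, hw⟩ => ?_
    refine Set.Subset.antisymm hHv fun v hv => ?_
    by_contra hvH
    obtain ⟨x, hx⟩ := hlc.exists_boundaryPath_forall_seg_notMem hH hsat hv hvH
    obtain ⟨n, hn, μ, hμ, hμx⟩ := hcof x w (hHv w hw)
    exact hx n hn (hμx ▸ hH μ (hμ ▸ hw))
  · intro htriv x v hv
    rcases htriv _ (fun w hw => hw.1) (hereditary_not_reaches x) (hlc.saturated_not_reaches x)
      with h | h
    · by_contra hvx
      exact Set.eq_empty_iff_forall_notMem.1 h v ⟨hv, hvx⟩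
    · have hx0 : Λ.IsVertex (x.seg 0 0) := x.seg_r 0 0 le_rfl (by simp)
      exact (((Set.ext_iff.1 h _).2 hx0).2 (reaches_seg_zero x)).elim

/-- A locally convex row-finite `k`-graph `Λ` is cofinal iff
the only saturated hereditary subsets of `Λ^0` are `∅` and `Λ^0`. -/
theorem statement14 {k : ℕ} (Λ : KGraph k) (hlc : Λ.LocallyConvex)
    (hrf : Λ.RowFinite) :
    Λ.Cofinal ↔ ∀ H : Set Λ.Path, (∀ v ∈ H, Λ.IsVertex v) →
      Λ.Hereditary H → Λ.Saturated H → H = ∅ ∨ H = {v | Λ.IsVertex v} :=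
  statement14_general Λ hlc
end

section
/- Let Λ be a locally convex row-finite k-graph and let H₁ ⊇ H₂ be saturated hereditary subsets of Λ^0. Then Δ(H₁,H₂) := {v ∈ H₁ : T(v) ∩ H₂ = ∅} is a hereditary subset of Λ^0 with Δ(H₁,H₂) ∩ H₂ = ∅, and moreover Σ(Δ(H₁,H₂)) ∩ H₂ = ∅. -/
/-!
Since `T(v)` is hereditary and contains every vertex `v`, `Δ(H₁,H₂)` is hereditary and misses
`H₂`. For the saturation, the complement of any hereditary set `H` is saturated: every vertex
`v` receives some path in `vΛ^{≤n}`, whose source lies outside `H` when `v` does. Hence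
`Σ(Δ(H₁,H₂)) ⊆ H₂ᶜ`.
-/

namespace KGraph

variable {k : ℕ} (Λ : KGraph k)

lemma mem_tree_self {v : Λ.Path} (hv : Λ.IsVertex v) : v ∈ Λ.tree v :=
  ⟨v, hv, by rw [← hv, Λ.s_r]⟩

lemma tree_s_subset_tree_r (lam : Λ.Path) : Λ.tree (Λ.s lam) ⊆ Λ.tree (Λ.r lam) := by
  rintro w ⟨μ, hrμ, rfl⟩
  exact ⟨Λ.comp lam μ, Λ.r_comp lam μ hrμ.symm, Λ.s_comp lam μ hrμ.symm⟩

variable {Λ}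

lemma Hereditary.delta {H₁ : Set Λ.Path} (h : Λ.Hereditary H₁) (H₂ : Set Λ.Path) :
    Λ.Hereditary (Λ.Delta H₁ H₂) := by
  rintro lam ⟨h1, htree⟩
  refine ⟨h lam h1, Set.subset_eq_empty ?_ htree⟩
  exact Set.inter_subset_inter_left H₂ (Λ.tree_s_subset_tree_r lam)

lemma disjoint_delta_right {H₁ H₂ : Set Λ.Path} (h2v : ∀ v ∈ H₂, Λ.IsVertex v) :
    Disjoint (Λ.Delta H₁ H₂) H₂ := by
  refine Set.disjoint_left.mpr fun v ⟨_, htree⟩ hv2 => ?_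
  exact (Set.eq_empty_iff_forall_notMem.mp htree) v ⟨Λ.mem_tree_self (h2v v hv2), hv2⟩

/-- A path `λ ∈ vΛ` with `d λ ≤ n` minimising `n - d λ` in the well-founded order of `ℕ^k`
cannot be extended by an edge without leaving `≤ n`, so it lies in `Λ^{≤n}`. -/
lemma exists_mem_boundedPaths {v : Λ.Path} (hv : Λ.IsVertex v) (n : Fin k → ℕ) :
    ∃ lam ∈ Λ.boundedPaths n, Λ.r lam = v := by
  let S : Set Λ.Path := {lam | Λ.r lam = v ∧ Λ.d lam ≤ n}
  have hvS : v ∈ S := ⟨hv, by rw [← hv, Λ.d_r]; exact zero_le⟩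
  obtain ⟨lam, ⟨hr, hdn⟩, hmin⟩ :=
    (InvImage.wf (fun lam => n - Λ.d lam) wellFounded_lt).has_min S ⟨v, hvS⟩
  refine ⟨lam, ⟨hdn, fun i hi e he hed => ?_⟩, hr⟩
  have hde : Λ.d (Λ.comp lam e) = Λ.d lam + Pi.single i 1 := by
    rw [Λ.d_comp lam e he.symm, hed]
  have hle : Λ.d lam + Pi.single i 1 ≤ n := by
    intro j
    rcases eq_or_ne j i with rfl | hji
    · simpa using hi
    · simpa [hji] using hdn j
  refine hmin (Λ.comp lam e) ⟨(Λ.r_comp lam e he.symm).trans hr, hde ▸ hle⟩ ?_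
  show n - Λ.d (Λ.comp lam e) < n - Λ.d lam
  rw [hde]
  refine Pi.lt_def.mpr ⟨tsub_le_tsub_left le_self_add n, i, ?_⟩
  simp only [Pi.sub_apply, Pi.add_apply, Pi.single_eq_same]
  omega

lemma Hereditary.saturated_compl {H : Set Λ.Path} (h : Λ.Hereditary H) :
    Λ.Saturated Hᶜ := by
  rintro v hv ⟨n, hn⟩ hvH
  obtain ⟨lam, hlam, hr⟩ := exists_mem_boundedPaths hv n
  exact hn lam hlam hr (h lam (hr ▸ hvH))

lemma satClosure_subset {H S : Set Λ.Path} (hHS : H ⊆ S) (hS : Λ.Saturated S) :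
    Λ.SatClosure H ⊆ S :=
  Set.sInter_subset_of_mem ⟨hHS, hS⟩

end KGraph

theorem statement16_general {k : ℕ} (Λ : KGraph k) (H₁ H₂ : Set Λ.Path)
    (h2v : ∀ v ∈ H₂, Λ.IsVertex v)
    (h1her : Λ.Hereditary H₁)
    (h2her : Λ.Hereditary H₂) :
    Λ.Hereditary (Λ.Delta H₁ H₂) ∧
    Λ.Delta H₁ H₂ ∩ H₂ = ∅ ∧
    Λ.SatClosure (Λ.Delta H₁ H₂) ∩ H₂ = ∅ := by
  have hdisj : Disjoint (Λ.Delta H₁ H₂) H₂ := KGraph.disjoint_delta_right h2v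
  have hsat : Λ.SatClosure (Λ.Delta H₁ H₂) ⊆ H₂ᶜ :=
    KGraph.satClosure_subset (Set.subset_compl_iff_disjoint_right.mpr hdisj)
      h2her.saturated_compl
  exact ⟨h1her.delta H₂, Set.disjoint_iff_inter_eq_empty.mp hdisj,
    Set.disjoint_iff_inter_eq_empty.mp (Set.subset_compl_iff_disjoint_right.mp hsat)⟩

/-- Definition 6.5 remark: Let `Λ` be a locally convex
row-finite `k`-graph and `H₁ ⊇ H₂` saturated hereditary subsets of `Λ^0`.
Then `Δ(H₁,H₂)` is hereditary, `Δ(H₁,H₂) ∩ H₂ = ∅` and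
`Σ(Δ(H₁,H₂)) ∩ H₂ = ∅`. -/
theorem statement16 {k : ℕ} (Λ : KGraph k) (hlc : Λ.LocallyConvex)
    (hrf : Λ.RowFinite) (H₁ H₂ : Set Λ.Path)
    (h1v : ∀ v ∈ H₁, Λ.IsVertex v) (h2v : ∀ v ∈ H₂, Λ.IsVertex v)
    (h21 : H₂ ⊆ H₁) (h1her : Λ.Hereditary H₁) (h1sat : Λ.Saturated H₁)
    (h2her : Λ.Hereditary H₂) (h2sat : Λ.Saturated H₂) :
    Λ.Hereditary (Λ.Delta H₁ H₂) ∧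
    Λ.Delta H₁ H₂ ∩ H₂ = ∅ ∧
    Λ.SatClosure (Λ.Delta H₁ H₂) ∩ H₂ = ∅ :=
  statement16_general Λ H₁ H₂ h2v h1her h2her
end
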